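/- Suppose (r, r′) ∈ ℂ² \ L. Then the ℂ-vector space of diagonal families for (r, r′) is one-dimensional, and every nonzero diagonal family s satisfies: (a) if r ∉ −ρ−2ℕ and r′ ∉ −ρ′−2ℕ, then s(q₁, q₂) ≠ 0 for all q₁, q₂ ∈ ℕ; (b) if r = −ρ−2i with i ∈ ℕ and r′ ∉ −ρ′−2ℕ, then s(q₁, q₂) = 0 whenever q₁ ≤ i or q₂ ≤ i, and s(q₁, q₂) ≠ 0 whenever q₁ > i and q₂ > i; (c) if r ∉ −ρ−2ℕ and r′ = −ρ′−2j with j ∈ ℕ, then s(q₁, q₂) ≠ 0 whenever q₁ ≤ j and q₂ ≤ j, and s(q₁, q₂) = 0 whenever q₁ > j or q₂ > j; (d) if r = −ρ−2i and r′ = −ρ′−2j with i, j ∈ ℕ and i < j, then s(q₁, q₂) ≠ 0 whenever i < q₁ ≤ j and i < q₂ ≤ j, and s(q₁, q₂) = 0 otherwise. -/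

import Mathlib

noncomputable section

/-- A diagonal family for `(r, r')` (case of unitary groups, ρ = n, ρ' = n−1):
(D1): `(r'+2q₁+n−1)·s(q₁,q₂) = (r+2q₁+n)·s(q₁+1,q₂)` and
(D2): `(r'+2q₂+n−1)·s(q₁,q₂) = (r+2q₂+n)·s(q₁,q₂+1)` for all `q₁, q₂ ∈ ℕ`. -/
def IsDiagFam (n : ℕ) (r r' : ℂ) (s : ℕ → ℕ → ℂ) : Prop :=
  ∀ q₁ q₂ : ℕ,
    (r' + 2*(q₁ : ℂ) + (n : ℂ) - 1) * s q₁ q₂ = (r + 2*(q₁ : ℂ) + (n : ℂ)) * s (q₁ + 1) q₂ ∧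
    (r' + 2*(q₂ : ℂ) + (n : ℂ) - 1) * s q₁ q₂ = (r + 2*(q₂ : ℂ) + (n : ℂ)) * s q₁ (q₂ + 1)

/-- The ℂ-vector space of diagonal families for `(r, r')`. -/
def diagFamSub (n : ℕ) (r r' : ℂ) : Submodule ℂ (ℕ → ℕ → ℂ) where
  carrier := {s | IsDiagFam n r r' s}
  add_mem' := by
    intro a b ha hb q₁ q₂
    constructor
    · simp only [Pi.add_apply]
      linear_combination (ha q₁ q₂).1 + (hb q₁ q₂).1
    · simp only [Pi.add_apply]
      linear_combination (ha q₁ q₂).2 + (hb q₁ q₂).2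
  zero_mem' := by
    intro q₁ q₂
    constructor <;> simp
  smul_mem' := by
    intro c s hs q₁ q₂
    constructor
    · simp only [Pi.smul_apply, smul_eq_mul]
      linear_combination c * (hs q₁ q₂).1
    · simp only [Pi.smul_apply, smul_eq_mul]
      linear_combination c * (hs q₁ q₂).2

/-- L = {(−ρ−2i, −ρ′−2j) : i, j ∈ ℕ, j ≤ i}, with ρ = n, ρ' = n−1. -/
def LC (n : ℕ) : Set (ℂ × ℂ) :=
  {p | ∃ i j : ℕ, j ≤ i ∧ p.1 = -(n : ℂ) - 2*(i : ℂ) ∧ p.2 = -((n : ℂ) - 1) - 2*(j : ℂ)}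

/-! Both (D1) and (D2) are the one-variable recurrence `a(q) t(q) = b(q) t(q+1)` with
`a(q) = r' + 2q + n - 1` and `b(q) = r + 2q + n`; `b` vanishes only at `q = i` when `r = -ρ-2i`,
and `a` only at `q = j` when `r' = -ρ'-2j`. Off `L` there is no `j ≤ i`, so `a` has no zero at or
below `i`: a solution vanishes up to `i`, is free at `p = i + 1` (at `p = 0` if there is no such
`i`), and is then determined, `t(q) = t(p) ∏_{p ≤ k < q} a(k)/b(k)`. Applying this in each variable
gives `s = s(p,p) f(q₁) f(q₂)`, so the space is a line, and `f(q) ≠ 0` exactly for `i < q ≤ j`. -/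

open Finset

section FirstOrderRecurrence

variable {K : Type*} [Field K] {A B : ℕ → K} {p : ℕ}

/-- Solutions of `A q * t q = B q * t (q + 1)` vanish below such a `p` and are determined by
`t p`. -/
structure IsRecurrenceStart (A B : ℕ → K) (p : ℕ) : Prop where
  B_ne_zero : ∀ k, p ≤ k → B k ≠ 0
  A_ne_zero : ∀ k < p, A k ≠ 0
  B_pred_eq_zero : ∀ k, k + 1 = p → B k = 0

def recurrenceSol (A B : ℕ → K) (p q : ℕ) : K :=
  if p ≤ q then ∏ k ∈ Ico p q, A k / B k else 0

lemma recurrenceSol_self : recurrenceSol A B p p = 1 := by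
  simp [recurrenceSol]

lemma recurrenceSol_of_lt {q : ℕ} (h : q < p) : recurrenceSol A B p q = 0 :=
  if_neg (not_le.2 h)

lemma recurrenceSol_succ {q : ℕ} (h : p ≤ q) :
    recurrenceSol A B p (q + 1) = recurrenceSol A B p q * (A q / B q) := by
  simp [recurrenceSol, h, h.trans q.le_succ, prod_Ico_succ_top h]

namespace IsRecurrenceStart

lemma recurrenceSol_rec (hp : IsRecurrenceStart A B p) (q : ℕ) :
    A q * recurrenceSol A B p q = B q * recurrenceSol A B p (q + 1) := by
  rcases lt_or_ge q p with h | h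
  · rw [recurrenceSol_of_lt h]
    rcases (Nat.succ_le_of_lt h).eq_or_lt with h' | h'
    · rw [hp.B_pred_eq_zero q h']; ring
    · rw [recurrenceSol_of_lt h']; ring
  · rw [recurrenceSol_succ h]
    field_simp [hp.B_ne_zero q h]

lemma eq_zero_of_lt (hp : IsRecurrenceStart A B p) {t : ℕ → K}
    (ht : ∀ q, A q * t q = B q * t (q + 1)) {q : ℕ} (hq : q < p) : t q = 0 := by
  induction hq.le using Nat.decreasingInduction with
  | self => exact absurd hq (lt_irrefl p)
  | of_succ k hk ih =>
    have hBt : B k * t (k + 1) = 0 := by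
      rcases (Nat.succ_le_of_lt hk).eq_or_lt with h | h
      · rw [hp.B_pred_eq_zero k h, zero_mul]
      · rw [ih h, mul_zero]
    exact (mul_eq_zero.1 ((ht k).trans hBt)).resolve_left (hp.A_ne_zero k hk)

lemma eq_mul_recurrenceSol (hp : IsRecurrenceStart A B p) {t : ℕ → K}
    (ht : ∀ q, A q * t q = B q * t (q + 1)) (q : ℕ) : t q = t p * recurrenceSol A B p q := by
  rcases lt_or_ge q p with h | h
  · rw [hp.eq_zero_of_lt ht h, recurrenceSol_of_lt h, mul_zero]
  induction q, h using Nat.le_induction with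
  | base => rw [recurrenceSol_self, mul_one]
  | succ q hq ih =>
    rw [recurrenceSol_succ hq, ← mul_assoc, ← ih, mul_div_assoc',
      eq_div_iff (hp.B_ne_zero q hq)]
    linear_combination -(ht q)

lemma recurrenceSol_ne_zero_iff (hp : IsRecurrenceStart A B p) (q : ℕ) :
    recurrenceSol A B p q ≠ 0 ↔ (∀ k, B k = 0 → k < q) ∧ (∀ k, A k = 0 → q ≤ k) := by
  rcases lt_or_ge q p with h | h
  · refine iff_of_false (not_not.2 (recurrenceSol_of_lt h)) fun hq => ?_
    have := hq.1 (p - 1) (hp.B_pred_eq_zero _ (by omega))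
    omega
  · have hBq : ∀ k, B k = 0 → k < q := fun k hk =>
      lt_of_lt_of_le (not_le.1 fun hk' => hp.B_ne_zero k hk' hk) h
    rw [recurrenceSol, if_pos h, prod_ne_zero_iff]
    constructor
    · refine fun hAB => ⟨hBq, fun k hk => not_lt.1 fun hkq => ?_⟩
      rcases lt_or_ge k p with hkp | hkp
      · exact hp.A_ne_zero k hkp hk
      · exact hAB k (mem_Ico.2 ⟨hkp, hkq⟩) (by rw [hk, zero_div])
    · rintro ⟨-, hA⟩ k hk
      rw [mem_Ico] at hk
      exact div_ne_zero (fun hk0 => absurd (hA k hk0) (not_le.2 hk.2)) (hp.B_ne_zero k hk.1)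

lemma eq_mul_recurrenceSol_mul (hp : IsRecurrenceStart A B p) {s : ℕ → ℕ → K}
    (h₁ : ∀ q₁ q₂, A q₁ * s q₁ q₂ = B q₁ * s (q₁ + 1) q₂)
    (h₂ : ∀ q₁ q₂, A q₂ * s q₁ q₂ = B q₂ * s q₁ (q₂ + 1)) (q₁ q₂ : ℕ) :
    s q₁ q₂ = s p p * (recurrenceSol A B p q₁ * recurrenceSol A B p q₂) := by
  rw [hp.eq_mul_recurrenceSol (h₁ · q₂) q₁, hp.eq_mul_recurrenceSol (h₂ p ·) q₂]
  ring

end IsRecurrenceStart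

end FirstOrderRecurrence

lemma sub_two_mul_natCast_injective (c : ℂ) : Function.Injective fun k : ℕ => c - 2 * (k : ℂ) := by
  intro a b h
  simpa using h

lemma forall_eq_sub_two_mul_imp_iff {c x : ℂ} {i : ℕ} (hx : x = c - 2 * (i : ℂ)) {P : ℕ → Prop} :
    (∀ k : ℕ, x = c - 2 * (k : ℂ) → P k) ↔ P i := by
  subst hx
  exact ⟨fun h => h i rfl, fun h k hk => sub_two_mul_natCast_injective c hk ▸ h⟩

lemma forall_eq_sub_two_mul_imp_iff_true {c x : ℂ} (hx : x ∉ Set.range fun k : ℕ => c - 2 * (k : ℂ))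
    {P : ℕ → Prop} : (∀ k : ℕ, x = c - 2 * (k : ℂ) → P k) ↔ True :=
  iff_true_intro fun k hk => absurd ⟨k, hk.symm⟩ hx

section DiagonalFamily

variable {n : ℕ} {r r' : ℂ} {p : ℕ}

def diagNum (n : ℕ) (r' : ℂ) (q : ℕ) : ℂ := r' + 2 * (q : ℂ) + n - 1

def diagDen (n : ℕ) (r : ℂ) (q : ℕ) : ℂ := r + 2 * (q : ℂ) + n

lemma diagNum_eq_zero_iff {k : ℕ} : diagNum n r' k = 0 ↔ r' = -((n : ℂ) - 1) - 2 * (k : ℂ) := by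
  unfold diagNum
  constructor <;> intro h <;> linear_combination h

lemma diagDen_eq_zero_iff {k : ℕ} : diagDen n r k = 0 ↔ r = -(n : ℂ) - 2 * (k : ℂ) := by
  unfold diagDen
  constructor <;> intro h <;> linear_combination h

lemma exists_isRecurrenceStart (hL : (r, r') ∉ LC n) :
    ∃ p, IsRecurrenceStart (diagNum n r') (diagDen n r) p := by
  by_cases hr : ∃ i : ℕ, r = -(n : ℂ) - 2 * (i : ℂ)
  · obtain ⟨i, hi⟩ := hr
    refine ⟨i + 1, ⟨fun k hk h0 => ?_, fun k hk h0 => ?_, fun k hk => ?_⟩⟩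
    · have := sub_two_mul_natCast_injective _ (hi.symm.trans (diagDen_eq_zero_iff.1 h0))
      omega
    · exact hL ⟨i, k, by omega, hi, diagNum_eq_zero_iff.1 h0⟩
    · rw [diagDen_eq_zero_iff, hi, Nat.succ_injective hk]
  · exact ⟨0, ⟨fun k _ h0 => hr ⟨k, diagDen_eq_zero_iff.1 h0⟩, fun k hk => absurd hk k.not_lt_zero,
      fun k hk => absurd hk k.succ_ne_zero⟩⟩

def diagSol (n : ℕ) (r r' : ℂ) (p : ℕ) : ℕ → ℕ → ℂ :=
  fun q₁ q₂ =>
    recurrenceSol (diagNum n r') (diagDen n r) p q₁ *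
      recurrenceSol (diagNum n r') (diagDen n r) p q₂

lemma isDiagFam_iff {s : ℕ → ℕ → ℂ} : IsDiagFam n r r' s ↔ ∀ q₁ q₂,
    diagNum n r' q₁ * s q₁ q₂ = diagDen n r q₁ * s (q₁ + 1) q₂ ∧
      diagNum n r' q₂ * s q₁ q₂ = diagDen n r q₂ * s q₁ (q₂ + 1) :=
  Iff.rfl

lemma IsDiagFam.eq_smul_diagSol (hp : IsRecurrenceStart (diagNum n r') (diagDen n r) p)
    {s : ℕ → ℕ → ℂ} (hs : IsDiagFam n r r' s) : s = s p p • diagSol n r r' p :=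
  funext₂ (hp.eq_mul_recurrenceSol_mul (fun q₁ q₂ => (hs q₁ q₂).1) (fun q₁ q₂ => (hs q₁ q₂).2))

lemma IsRecurrenceStart.isDiagFam_diagSol
    (hp : IsRecurrenceStart (diagNum n r') (diagDen n r) p) :
    IsDiagFam n r r' (diagSol n r r' p) := by
  refine isDiagFam_iff.2 fun q₁ q₂ => ⟨?_, ?_⟩ <;> simp only [diagSol]
  · linear_combination
      recurrenceSol (diagNum n r') (diagDen n r) p q₂ * hp.recurrenceSol_rec q₁
  · linear_combination
      recurrenceSol (diagNum n r') (diagDen n r) p q₁ * hp.recurrenceSol_rec q₂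

lemma diagFamSub_eq_span (hp : IsRecurrenceStart (diagNum n r') (diagDen n r) p) :
    diagFamSub n r r' = Submodule.span ℂ {diagSol n r r' p} := by
  refine le_antisymm (fun s hs => Submodule.mem_span_singleton.2 ⟨s p p, ?_⟩) ?_
  · exact (hs.eq_smul_diagSol hp).symm
  · rw [Submodule.span_le, Set.singleton_subset_iff]
    exact hp.isDiagFam_diagSol

lemma finrank_diagFamSub (hL : (r, r') ∉ LC n) : Module.finrank ℂ (diagFamSub n r r') = 1 := by
  obtain ⟨p, hp⟩ := exists_isRecurrenceStart hL
  rw [diagFamSub_eq_span hp]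
  refine finrank_span_singleton fun h0 => ?_
  simpa [diagSol, recurrenceSol_self] using congrFun₂ h0 p p

def InDiagSupport (n : ℕ) (r r' : ℂ) (q : ℕ) : Prop :=
  (∀ i : ℕ, r = -(n : ℂ) - 2 * (i : ℂ) → i < q) ∧
    ∀ j : ℕ, r' = -((n : ℂ) - 1) - 2 * (j : ℂ) → q ≤ j

lemma IsDiagFam.ne_zero_iff (hL : (r, r') ∉ LC n) {s : ℕ → ℕ → ℂ} (hs : IsDiagFam n r r' s)
    (hs0 : s ≠ 0) (q₁ q₂ : ℕ) :
    s q₁ q₂ ≠ 0 ↔ InDiagSupport n r r' q₁ ∧ InDiagSupport n r r' q₂ := by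
  obtain ⟨p, hp⟩ := exists_isRecurrenceStart hL
  have hsp : s p p ≠ 0 := fun h0 => hs0 (by rw [hs.eq_smul_diagSol hp, h0, zero_smul])
  rw [hs.eq_smul_diagSol hp]
  simp only [Pi.smul_apply, smul_eq_mul, diagSol, ne_eq, mul_eq_zero, hsp, false_or, not_or]
  simp only [hp.recurrenceSol_ne_zero_iff, diagNum_eq_zero_iff, diagDen_eq_zero_iff, InDiagSupport]

end DiagonalFamily

theorem statement13_general (n : ℕ) (r r' : ℂ) (hL : (r, r') ∉ LC n) :
    Module.finrank ℂ (diagFamSub n r r') = 1 ∧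
    ∀ s : ℕ → ℕ → ℂ, IsDiagFam n r r' s → s ≠ 0 →
      ((r ∉ Set.range (fun i : ℕ => -(n : ℂ) - 2*(i : ℂ)) →
        r' ∉ Set.range (fun j : ℕ => -((n : ℂ) - 1) - 2*(j : ℂ)) →
        ∀ q₁ q₂ : ℕ, s q₁ q₂ ≠ 0) ∧
       (∀ i : ℕ, r = -(n : ℂ) - 2*(i : ℂ) →
        r' ∉ Set.range (fun j : ℕ => -((n : ℂ) - 1) - 2*(j : ℂ)) →
        (∀ q₁ q₂ : ℕ, (q₁ ≤ i ∨ q₂ ≤ i) → s q₁ q₂ = 0) ∧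
        (∀ q₁ q₂ : ℕ, i < q₁ → i < q₂ → s q₁ q₂ ≠ 0)) ∧
       (r ∉ Set.range (fun i : ℕ => -(n : ℂ) - 2*(i : ℂ)) →
        ∀ j : ℕ, r' = -((n : ℂ) - 1) - 2*(j : ℂ) →
        (∀ q₁ q₂ : ℕ, q₁ ≤ j → q₂ ≤ j → s q₁ q₂ ≠ 0) ∧
        (∀ q₁ q₂ : ℕ, (j < q₁ ∨ j < q₂) → s q₁ q₂ = 0)) ∧
       (∀ i j : ℕ, r = -(n : ℂ) - 2*(i : ℂ) → r' = -((n : ℂ) - 1) - 2*(j : ℂ) → i < j →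
        (∀ q₁ q₂ : ℕ, i < q₁ → q₁ ≤ j → i < q₂ → q₂ ≤ j → s q₁ q₂ ≠ 0) ∧
        (∀ q₁ q₂ : ℕ, ¬(i < q₁ ∧ q₁ ≤ j ∧ i < q₂ ∧ q₂ ≤ j) → s q₁ q₂ = 0))) := by
  refine ⟨finrank_diagFamSub hL, fun s hs hs0 => ?_⟩
  have key := hs.ne_zero_iff hL hs0
  refine ⟨fun hr hr' => ?_, fun i hi hr' => ?_, fun hr j hj => ?_, fun i j hi hj _ => ?_⟩
  · simpa only [InDiagSupport, forall_eq_sub_two_mul_imp_iff_true hr,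
      forall_eq_sub_two_mul_imp_iff_true hr', and_self, iff_true] using key
  · simp only [InDiagSupport, forall_eq_sub_two_mul_imp_iff hi,
      forall_eq_sub_two_mul_imp_iff_true hr', and_true] at key
    refine ⟨fun q₁ q₂ h => not_not.1 fun h' => ?_, fun q₁ q₂ h₁ h₂ => (key q₁ q₂).2 ⟨h₁, h₂⟩⟩
    have := (key q₁ q₂).1 h'
    omega
  · simp only [InDiagSupport, forall_eq_sub_two_mul_imp_iff hj,
      forall_eq_sub_two_mul_imp_iff_true hr, true_and] at key
    refine ⟨fun q₁ q₂ h₁ h₂ => (key q₁ q₂).2 ⟨h₁, h₂⟩, fun q₁ q₂ h => not_not.1 fun h' => ?_⟩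
    have := (key q₁ q₂).1 h'
    omega
  · simp only [InDiagSupport, forall_eq_sub_two_mul_imp_iff hi, forall_eq_sub_two_mul_imp_iff hj]
      at key
    refine ⟨fun q₁ q₂ h₁ h₂ h₃ h₄ => (key q₁ q₂).2 ⟨⟨h₁, h₂⟩, h₃, h₄⟩,
      fun q₁ q₂ h => not_not.1 fun h' => ?_⟩
    obtain ⟨⟨h₁, h₂⟩, h₃, h₄⟩ := (key q₁ q₂).1 h'
    exact h ⟨h₁, h₂, h₃, h₄⟩

theorem statement13 (n : ℕ) (hn : 2 ≤ n) (r r' : ℂ) (hL : (r, r') ∉ LC n) :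
    Module.finrank ℂ (diagFamSub n r r') = 1 ∧
    ∀ s : ℕ → ℕ → ℂ, IsDiagFam n r r' s → s ≠ 0 →
      ((r ∉ Set.range (fun i : ℕ => -(n : ℂ) - 2*(i : ℂ)) →
        r' ∉ Set.range (fun j : ℕ => -((n : ℂ) - 1) - 2*(j : ℂ)) →
        ∀ q₁ q₂ : ℕ, s q₁ q₂ ≠ 0) ∧
       (∀ i : ℕ, r = -(n : ℂ) - 2*(i : ℂ) →
        r' ∉ Set.range (fun j : ℕ => -((n : ℂ) - 1) - 2*(j : ℂ)) →
        (∀ q₁ q₂ : ℕ, (q₁ ≤ i ∨ q₂ ≤ i) → s q₁ q₂ = 0) ∧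
        (∀ q₁ q₂ : ℕ, i < q₁ → i < q₂ → s q₁ q₂ ≠ 0)) ∧
       (r ∉ Set.range (fun i : ℕ => -(n : ℂ) - 2*(i : ℂ)) →
        ∀ j : ℕ, r' = -((n : ℂ) - 1) - 2*(j : ℂ) →
        (∀ q₁ q₂ : ℕ, q₁ ≤ j → q₂ ≤ j → s q₁ q₂ ≠ 0) ∧
        (∀ q₁ q₂ : ℕ, (j < q₁ ∨ j < q₂) → s q₁ q₂ = 0)) ∧
       (∀ i j : ℕ, r = -(n : ℂ) - 2*(i : ℂ) → r' = -((n : ℂ) - 1) - 2*(j : ℂ) → i < j →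
        (∀ q₁ q₂ : ℕ, i < q₁ → q₁ ≤ j → i < q₂ → q₂ ≤ j → s q₁ q₂ ≠ 0) ∧
        (∀ q₁ q₂ : ℕ, ¬(i < q₁ ∧ q₁ ≤ j ∧ i < q₂ ∧ q₂ ≤ j) → s q₁ q₂ = 0))) :=
  statement13_general n r r' hL

end
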